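/- Let s₁, s₂ ∈ ℂ be nonzero and u ∈ ℂ. Define A = [[s₁, 1], [0, s₁⁻¹]], B = [[s₂, 0], [u, s₂⁻¹]], C = B·A·B⁻¹·A⁻¹, D = A⁻¹·B⁻¹·A·B, and let v = tr(C). Let S : ℤ → ℂ satisfy S(0) = 1, S(1) = v, and S(k+1) = v·S(k) − S(k−1) for every integer k. Suppose n is a natural number with S(n−1) = 0. Then the (1,1) entry of Cⁿ·A·Dⁿ equals s₁, and the (1,1) entry of (A·B·A⁻¹·B⁻¹)ⁿ·B·(B⁻¹·A⁻¹·B·A)ⁿ equals s₂. -/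

import Mathlib

/-!
For `X` of determinant one, Cayley–Hamilton gives `X² = (tr X) X - 1`, hence
`Xⁿ = S_{n-1}(tr X) X - S_{n-2}(tr X)`. The four commutators all have
trace `v` (cyclicity of the trace, and `tr X⁻¹ = tr X` in `SL₂`), so when `S_{n-1}(v) = 0`
their `n`-th powers are the same scalar `c = -S_{n-2}(v)`, and `c² = 1` by the identity
`S_{n-2}² + S_{n-1}² - v S_{n-2} S_{n-1} = 1`. Hence `Cⁿ A Dⁿ = c² A = A`, and likewise
for `B`.
-/

namespace Polynomial.Chebyshev

variable {R : Type*} [CommRing R]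

theorem eq_eval_S_of_recurrence {v : R} {a : ℤ → R} (h0 : a 0 = 1) (h1 : a 1 = v)
    (hrec : ∀ k : ℤ, a (k + 1) = v * a k - a (k - 1)) (k : ℤ) :
    a k = (S R k).eval v := by
  induction k using Chebyshev.induct with
  | zero => simp [h0]
  | one => simp [h1]
  | add_two n ih₁ ih₀ =>
    have h := hrec (n + 1)
    rw [add_assoc, one_add_one_eq_two, add_sub_cancel_right] at h
    rw [h, ih₁, ih₀, S_add_two, eval_sub, eval_mul, eval_X]
  | neg_add_one n ih₀ ih₁ =>
    have h := hrec (-n)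
    rw [S_sub_one, eval_sub, eval_mul, eval_X, ← ih₀, ← ih₁]
    linear_combination h

variable {A : Type*} [Ring A] [Algebra R A]

theorem pow_eq_eval_S_smul_sub {v : R} {x : A} (hx : x * x = v • x - 1) (n : ℕ) :
    x ^ n = (S R (n - 1)).eval v • x - (S R (n - 2)).eval v • 1 := by
  induction n with
  | zero => simp [S_neg_one, S_neg_two]
  | succ n ih =>
    push_cast
    rw [add_sub_cancel_right, add_sub_assoc, show (1 : ℤ) - 2 = -1 by norm_num,
      ← sub_eq_add_neg, pow_succ, ih, sub_mul, smul_mul_assoc, hx, smul_mul_assoc, one_mul,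
      S_eq R n, eval_sub, eval_mul, eval_X]
    module

theorem pow_mul_mul_pow_eq_self {v : R} {x y : A} (hx : x * x = v • x - 1)
    (hy : y * y = v • y - 1) {n : ℕ} (hn : (S R (n - 1)).eval v = 0) (z : A) :
    x ^ n * z * y ^ n = z := by
  have hsq : (S R (n - 2)).eval v ^ 2 = 1 := by
    have h := congrArg (eval v) (S_sq_add_S_sq R ((n : ℤ) - 2))
    rw [show (n : ℤ) - 2 + 1 = n - 1 by ring] at h
    simpa [hn] using h
  rw [pow_eq_eval_S_smul_sub hx, pow_eq_eval_S_smul_sub hy, hn]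
  simp only [zero_smul, zero_sub, neg_mul, mul_neg, smul_mul_assoc, mul_smul_comm, one_mul,
    mul_one, smul_neg, neg_neg, smul_smul, ← sq, hsq, one_smul]

end Polynomial.Chebyshev

namespace Matrix

variable {R : Type*} [CommRing R]

theorem mul_self_eq_trace_smul_sub_det_smul (M : Matrix (Fin 2) (Fin 2) R) :
    M * M = M.trace • M - M.det • 1 := by
  ext i j
  fin_cases i <;> fin_cases j <;> simp [mul_apply, trace_fin_two, det_fin_two] <;> ring

theorem trace_inv_of_det_eq_one {M : Matrix (Fin 2) (Fin 2) R} (hM : M.det = 1) :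
    M⁻¹.trace = M.trace := by
  rw [inv_def, hM, Ring.inverse_one, one_smul, adjugate_fin_two, trace_fin_two_of,
    trace_fin_two, add_comm]

theorem trace_mul_mul_inv_mul_inv_comm {A B : Matrix (Fin 2) (Fin 2) R} (hA : IsUnit A.det)
    (hB : IsUnit B.det) : (A * B * A⁻¹ * B⁻¹).trace = (B * A * B⁻¹ * A⁻¹).trace := by
  have hdet : (B * A * B⁻¹ * A⁻¹).det = 1 := by
    rw [det_mul, det_mul, det_mul, det_nonsing_inv, det_nonsing_inv, mul_right_comm (_ * _),
      mul_assoc B.det, Ring.mul_inverse_cancel _ hA, mul_one, Ring.mul_inverse_cancel _ hB]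
  rw [← trace_inv_of_det_eq_one hdet, mul_inv_rev, mul_inv_rev, mul_inv_rev,
    nonsing_inv_nonsing_inv _ hA, nonsing_inv_nonsing_inv _ hB, mul_assoc, mul_assoc]

end Matrix

theorem w11_on_nonCanonical_components
    (s₁ s₂ u : ℂ) (hs₁ : s₁ ≠ 0) (hs₂ : s₂ ≠ 0)
    (A B C D : Matrix (Fin 2) (Fin 2) ℂ)
    (hA : A = !![s₁, 1; 0, s₁⁻¹]) (hB : B = !![s₂, 0; u, s₂⁻¹])
    (hC : C = B * A * B⁻¹ * A⁻¹) (hD : D = A⁻¹ * B⁻¹ * A * B)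
    (v : ℂ) (hv : v = Matrix.trace C)
    (S : ℤ → ℂ)
    (h0 : S 0 = 1) (h1 : S 1 = v)
    (hrec : ∀ k : ℤ, S (k + 1) = v * S k - S (k - 1))
    (n : ℕ) (hS : S ((n : ℤ) - 1) = 0) :
    (C ^ n * A * D ^ n) 0 0 = s₁ ∧
    ((A * B * A⁻¹ * B⁻¹) ^ n * B * (B⁻¹ * A⁻¹ * B * A) ^ n) 0 0 = s₂ := by
  have hdetA : A.det = 1 := by simp [hA, Matrix.det_fin_two_of, hs₁]
  have hdetB : B.det = 1 := by simp [hB, Matrix.det_fin_two_of, hs₂]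
  have hquad (X : Matrix (Fin 2) (Fin 2) ℂ) (hX : X.det = 1) (htr : X.trace = v) :
      X * X = v • X - 1 := by
    rw [Matrix.mul_self_eq_trace_smul_sub_det_smul, hX, htr, one_smul]
  have hcycle (W X Y Z : Matrix (Fin 2) (Fin 2) ℂ) :
      (W * X * Y * Z).trace = (Y * Z * W * X).trace := by
    rw [mul_assoc _ Y, Matrix.trace_mul_comm, ← mul_assoc]
  have hswap : (A * B * A⁻¹ * B⁻¹).trace = v := by
    rw [Matrix.trace_mul_mul_inv_mul_inv_comm (hdetA ▸ isUnit_one) (hdetB ▸ isUnit_one), ← hC,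
      hv]
  have hquadC := hquad C (by simp [hC, hdetA, hdetB, Matrix.det_nonsing_inv]) hv.symm
  have hquadD := hquad D (by simp [hD, hdetA, hdetB, Matrix.det_nonsing_inv])
    (by rw [hD, hcycle, hswap])
  have hquadC' := hquad (A * B * A⁻¹ * B⁻¹) (by simp [hdetA, hdetB, Matrix.det_nonsing_inv])
    hswap
  have hquadD' := hquad (B⁻¹ * A⁻¹ * B * A) (by simp [hdetA, hdetB, Matrix.det_nonsing_inv])
    (by rw [hcycle, ← hC, hv])
  have hn : (Polynomial.Chebyshev.S ℂ (n - 1)).eval v = 0 := by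
    rwa [← Polynomial.Chebyshev.eq_eval_S_of_recurrence h0 h1 hrec]
  constructor
  · rw [Polynomial.Chebyshev.pow_mul_mul_pow_eq_self hquadC hquadD hn, hA]
    simp
  · rw [Polynomial.Chebyshev.pow_mul_mul_pow_eq_self hquadC' hquadD' hn, hB]
    simp
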